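/- Concentration of merged posterior parameter around the network average: with α^{(i)}(t) = η ∑_{τ=1}^{t-1} ∑_j (W^{t-τ})_{ij} x^{(j)}_τ + 1 where x^{(j)}_τ ∈ [0,1] and W is doubly stochastic for a strongly connected network, it holds that |α^{(i)}(t) - 1 - (η/N) S(t)| ≤ 4η log N / (1 - σ₂(W)), where S(t) = ∑_{τ=1}^{t-1} ∑_j x^{(j)}_τ. -/

import Mathlib

/-!
Write `σ = secondSingular W` and `m_τ = (∑ j, x τ j) / N`. The deviation is `η` times
`∑_τ ((W ^ (t - τ) *ᵥ x τ) i - m_τ)`. Since `W ^ k` is doubly stochastic, each term lies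
between `-1` and `1`; and since `W ^ k` fixes constants and preserves the mean-zero subspace,
on which it contracts the Euclidean norm by `σ ^ k`, the term is also at most `√N * σ ^ k` in
absolute value. With `K ≈ log N / (2 (1 - σ))`, so that `√N * σ ^ K ≤ 1`, the sum of
`min 1 (√N * σ ^ k)` is at most `K` plus a geometric series `1 / (1 - σ)`, hence at most
`4 log N / (1 - σ)`.
-/

open Matrix Real

/-- Second-largest singular value of a doubly stochastic matrix, characterized as
the largest gain of `W` on vectors orthogonal to the all-ones vector. -/
noncomputable def secondSingular {N : ℕ} (W : Matrix (Fin N) (Fin N) ℝ) : ℝ :=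
  sSup {r | ∃ x : Fin N → ℝ, (∑ i, x i) = 0 ∧ (∑ i, (x i) ^ 2) = 1 ∧
    r = Real.sqrt (∑ i, (W.mulVec x i) ^ 2)}

open Finset

namespace Matrix

variable {n : Type*} [Fintype n] [DecidableEq n] {M : Matrix n n ℝ}

lemma mem_rowStochastic_of_mem_doublyStochastic (hM : M ∈ doublyStochastic ℝ n) :
    M ∈ rowStochastic ℝ n :=
  (mem_doublyStochastic_iff_mem_rowStochastic_and_mem_colStochastic.1 hM).1

lemma sq_mulVec_le_mulVec_sq_of_mem_rowStochastic (hM : M ∈ rowStochastic ℝ n)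
    (x : n → ℝ) (i : n) : (M *ᵥ x) i ^ 2 ≤ (M *ᵥ fun j => x j ^ 2) i := by
  simpa [mulVec, dotProduct, smul_eq_mul] using
    (even_two.convexOn_pow (𝕜 := ℝ)).map_sum_le (t := univ) (p := x)
      (fun j _ => nonneg_of_mem_rowStochastic hM) (sum_row_of_mem_rowStochastic hM i)
      (fun j _ => Set.mem_univ _)

lemma sum_sq_mulVec_le_of_mem_doublyStochastic (hM : M ∈ doublyStochastic ℝ n)
    (x : n → ℝ) : ∑ i, (M *ᵥ x) i ^ 2 ≤ ∑ i, x i ^ 2 := by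
  rw [mem_doublyStochastic_iff_mem_rowStochastic_and_mem_colStochastic] at hM
  calc ∑ i, (M *ᵥ x) i ^ 2 ≤ ∑ i, (M *ᵥ fun j => x j ^ 2) i :=
        sum_le_sum fun i _ => sq_mulVec_le_mulVec_sq_of_mem_rowStochastic hM.1 x i
    _ = ∑ i, x i ^ 2 := sum_mulVec_of_mem_colStochastic hM.2

lemma mulVec_mem_Icc_of_mem_rowStochastic (hM : M ∈ rowStochastic ℝ n) {x : n → ℝ}
    (hx : ∀ j, x j ∈ Set.Icc (0 : ℝ) 1) (i : n) : (M *ᵥ x) i ∈ Set.Icc (0 : ℝ) 1 := by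
  refine ⟨nonneg_mulVec_of_mem_rowStochastic hM (fun j => (hx j).1) i, ?_⟩
  calc (M *ᵥ x) i = ∑ j, M i j * x j := rfl
    _ ≤ ∑ j, M i j := sum_le_sum fun j _ =>
        mul_le_of_le_one_right (nonneg_of_mem_rowStochastic hM) (hx j).2
    _ = 1 := sum_row_of_mem_rowStochastic hM i

lemma mulVec_sub_const_of_mem_rowStochastic (hM : M ∈ rowStochastic ℝ n) (x : n → ℝ)
    (c : ℝ) : (M *ᵥ fun j => x j - c) = fun i => (M *ᵥ x) i - c := by
  ext i
  simp [mulVec, dotProduct, mul_sub, sum_sub_distrib, ← sum_mul,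
    sum_row_of_mem_rowStochastic hM i]

end Matrix

lemma sum_div_mem_Icc {N : ℕ} {v : Fin N → ℝ} (hv : ∀ j, v j ∈ Set.Icc (0 : ℝ) 1) :
    (∑ j, v j) / N ∈ Set.Icc (0 : ℝ) 1 :=
  ⟨div_nonneg (sum_nonneg fun j _ => (hv j).1) N.cast_nonneg,
    div_le_one_of_le₀ (by simpa using sum_le_sum fun j (_ : j ∈ univ) => (hv j).2)
      N.cast_nonneg⟩

section SecondSingular

variable {N : ℕ} {W : Matrix (Fin N) (Fin N) ℝ}

lemma secondSingular_nonneg (W : Matrix (Fin N) (Fin N) ℝ) : 0 ≤ secondSingular W :=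
  Real.sSup_nonneg (by rintro _ ⟨x, -, -, rfl⟩; exact Real.sqrt_nonneg _)

lemma sqrt_sum_sq_mulVec_le_secondSingular (hW : W ∈ doublyStochastic ℝ (Fin N))
    {x : Fin N → ℝ} (hx₀ : ∑ i, x i = 0) (hx₁ : ∑ i, x i ^ 2 = 1) :
    √(∑ i, (W *ᵥ x) i ^ 2) ≤ secondSingular W := by
  refine le_csSup ⟨1, ?_⟩ ⟨x, hx₀, hx₁, rfl⟩
  rintro _ ⟨y, -, hy, rfl⟩
  exact Real.sqrt_le_one.2 (hy ▸ sum_sq_mulVec_le_of_mem_doublyStochastic hW y)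

lemma sum_sq_mulVec_le_secondSingular_sq_mul (hW : W ∈ doublyStochastic ℝ (Fin N))
    {z : Fin N → ℝ} (hz : ∑ i, z i = 0) :
    ∑ i, (W *ᵥ z) i ^ 2 ≤ secondSingular W ^ 2 * ∑ i, z i ^ 2 := by
  rcases (sum_nonneg fun i _ => sq_nonneg (z i)).eq_or_lt with h₀ | hpos
  · have hz₀ : z = 0 := funext fun i =>
      pow_eq_zero_iff two_ne_zero |>.1 <|
        (sum_eq_zero_iff_of_nonneg fun i _ => sq_nonneg (z i)).1 h₀.symm i (mem_univ i)
    simp [hz₀]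
  set s := √(∑ i, z i ^ 2)
  have hs : s ^ 2 = ∑ i, z i ^ 2 := Real.sq_sqrt hpos.le
  have hsum_sq_smul : ∀ v : Fin N → ℝ, ∑ i, (s⁻¹ • v) i ^ 2 = (s ^ 2)⁻¹ * ∑ i, v i ^ 2 :=
    fun v => by simp only [Pi.smul_apply, smul_eq_mul, mul_pow, inv_pow, mul_sum]
  have hunit := sqrt_sum_sq_mulVec_le_secondSingular hW (x := s⁻¹ • z)
    (by simp [← mul_sum, hz]) (by rw [hsum_sq_smul, hs, inv_mul_cancel₀ hpos.ne'])
  rw [mulVec_smul, hsum_sq_smul, Real.sqrt_le_left (secondSingular_nonneg W),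
    inv_mul_le_iff₀ (pow_pos (Real.sqrt_pos.2 hpos) 2), hs] at hunit
  linarith

lemma sum_sq_pow_mulVec_le (hW : W ∈ doublyStochastic ℝ (Fin N)) (k : ℕ)
    {z : Fin N → ℝ} (hz : ∑ i, z i = 0) :
    ∑ i, (W ^ k *ᵥ z) i ^ 2 ≤ (secondSingular W ^ k) ^ 2 * ∑ i, z i ^ 2 := by
  induction k with
  | zero => simp
  | succ k ih =>
    have hzk : ∑ i, (W ^ k *ᵥ z) i = 0 := by
      rw [sum_mulVec_of_mem_doublyStochastic (pow_mem hW k), hz]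
    rw [pow_succ', ← mulVec_mulVec]
    calc ∑ i, (W *ᵥ W ^ k *ᵥ z) i ^ 2 ≤ secondSingular W ^ 2 * ∑ i, (W ^ k *ᵥ z) i ^ 2 :=
          sum_sq_mulVec_le_secondSingular_sq_mul hW hzk
      _ ≤ secondSingular W ^ 2 * ((secondSingular W ^ k) ^ 2 * ∑ i, z i ^ 2) := by gcongr
      _ = (secondSingular W ^ (k + 1)) ^ 2 * ∑ i, z i ^ 2 := by ring

lemma abs_pow_mulVec_sub_mean_le_sqrt_mul (hW : W ∈ doublyStochastic ℝ (Fin N))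
    {v : Fin N → ℝ} (hv : ∀ j, v j ∈ Set.Icc (0 : ℝ) 1) (k : ℕ) (i : Fin N) :
    |(W ^ k *ᵥ v) i - (∑ j, v j) / N| ≤ √N * secondSingular W ^ k := by
  set m := (∑ j, v j) / N
  have hm := sum_div_mem_Icc hv
  set z : Fin N → ℝ := fun j => v j - m
  have hz : ∑ j, z j = 0 := by
    have hN : (N : ℝ) ≠ 0 := Nat.cast_ne_zero.2 i.pos.ne'
    simp [z, m, sum_sub_distrib, mul_div_cancel₀ _ hN]
  have hz_sq : ∑ j, z j ^ 2 ≤ N := by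
    simpa using sum_le_sum fun j (_ : j ∈ univ) => (sq_le_one_iff_abs_le_one (z j)).2 <|
      abs_sub_le_of_nonneg_of_le (hv j).1 (hv j).2 hm.1 hm.2
  have hrow := mem_rowStochastic_of_mem_doublyStochastic (pow_mem hW k)
  rw [show (W ^ k *ᵥ v) i - m = (W ^ k *ᵥ z) i by
    rw [mulVec_sub_const_of_mem_rowStochastic hrow]]
  refine abs_le_of_sq_le_sq ?_ (by positivity [secondSingular_nonneg W])
  calc (W ^ k *ᵥ z) i ^ 2 ≤ ∑ l, (W ^ k *ᵥ z) l ^ 2 :=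
        single_le_sum (f := fun l => (W ^ k *ᵥ z) l ^ 2) (fun l _ => sq_nonneg _) (mem_univ i)
    _ ≤ (secondSingular W ^ k) ^ 2 * ∑ j, z j ^ 2 := sum_sq_pow_mulVec_le hW k hz
    _ ≤ (secondSingular W ^ k) ^ 2 * N := by gcongr
    _ = (√N * secondSingular W ^ k) ^ 2 := by rw [mul_pow, Real.sq_sqrt N.cast_nonneg, mul_comm]

lemma abs_pow_mulVec_sub_mean_le_min (hW : W ∈ doublyStochastic ℝ (Fin N))
    {v : Fin N → ℝ} (hv : ∀ j, v j ∈ Set.Icc (0 : ℝ) 1) (k : ℕ) (i : Fin N) :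
    |(W ^ k *ᵥ v) i - (∑ j, v j) / N| ≤ min 1 (√N * secondSingular W ^ k) := by
  have hrow := mem_rowStochastic_of_mem_doublyStochastic (pow_mem hW k)
  have hWv := mulVec_mem_Icc_of_mem_rowStochastic hrow hv i
  have hm := sum_div_mem_Icc hv
  exact le_min (abs_sub_le_of_nonneg_of_le hWv.1 hWv.2 hm.1 hm.2)
    (abs_pow_mulVec_sub_mean_le_sqrt_mul hW hv k i)

end SecondSingular

lemma pow_le_exp_neg_mul {σ : ℝ} (hσ : 0 ≤ σ) (K : ℕ) : σ ^ K ≤ exp (-((1 - σ) * K)) := by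
  calc σ ^ K ≤ exp (σ - 1) ^ K := by gcongr; linarith [add_one_le_exp (σ - 1)]
    _ = exp (-((1 - σ) * K)) := by rw [← exp_nat_mul]; ring_nf

lemma mul_pow_le_one_of_log_le {C σ : ℝ} (hC : 0 < C) (hσ : 0 ≤ σ) {K : ℕ}
    (hK : log C ≤ (1 - σ) * K) : C * σ ^ K ≤ 1 := by
  calc C * σ ^ K ≤ exp (log C) * exp (-((1 - σ) * K)) := by
        rw [exp_log hC]; gcongr; exact pow_le_exp_neg_mul hσ K
    _ ≤ 1 := by rw [← exp_add]; exact exp_le_one_iff.2 (by linarith)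

/-- Once `C * σ ^ K ≤ 1`, each term is at most `σ ^ (k - K)` (truncated subtraction), which is
`1` for the first `K` indices and geometric afterwards. -/
lemma sum_Icc_min_one_mul_pow_le {C σ : ℝ} (hσ₀ : 0 ≤ σ) (hσ₁ : σ < 1) {K : ℕ}
    (hK : C * σ ^ K ≤ 1) (n : ℕ) :
    ∑ k ∈ Icc 1 n, min 1 (C * σ ^ k) ≤ K + 1 / (1 - σ) := by
  have hterm : ∀ k, min 1 (C * σ ^ k) ≤ σ ^ (k - K) := by
    intro k
    rcases le_or_gt k K with hk | hk
    · rw [Nat.sub_eq_zero_of_le hk, pow_zero]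
      exact min_le_left _ _
    · calc min 1 (C * σ ^ k) ≤ C * σ ^ K * σ ^ (k - K) := by
            rw [mul_assoc, ← pow_add, Nat.add_sub_cancel' hk.le]; exact min_le_right _ _
        _ ≤ σ ^ (k - K) := mul_le_of_le_one_left (by positivity) hK
  calc ∑ k ∈ Icc 1 n, min 1 (C * σ ^ k) ≤ ∑ k ∈ range (K + (n + 1)), σ ^ (k - K) := by
        refine (sum_le_sum fun k _ => hterm k).trans <|
          sum_le_sum_of_subset_of_nonneg ?_ fun k _ _ => by positivity
        intro k hk
        simp only [mem_Icc, mem_range] at hk ⊢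
        omega
    _ = K + ∑ j ∈ range (n + 1), σ ^ j := by
        rw [sum_range_add]
        congr 1
        · rw [sum_congr rfl fun k hk => by rw [Nat.sub_eq_zero_of_le (mem_range.1 hk).le]]
          simp
        · simp
    _ ≤ K + 1 / (1 - σ) := by
        gcongr
        have := geom_sum_Ico_le_of_lt_one (m := 0) (n := n + 1) hσ₀ hσ₁
        rwa [pow_zero, ← range_eq_Ico] at this

lemma sum_Icc_min_one_sqrt_mul_pow_le {N : ℕ} (hN : 2 ≤ N) {σ : ℝ} (hσ₀ : 0 ≤ σ)
    (hσ₁ : σ < 1) (n : ℕ) :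
    ∑ k ∈ Icc 1 n, min 1 (√N * σ ^ k) ≤ 4 * log N / (1 - σ) := by
  have hD : 0 < 1 - σ := by linarith
  have hlog : log 2 ≤ log N := log_le_log two_pos (by exact_mod_cast hN)
  set K := ⌈log N / (2 * (1 - σ))⌉₊
  have hK : log N / (2 * (1 - σ)) ≤ K := Nat.le_ceil _
  have hK' : (K : ℝ) - 1 < log N / (2 * (1 - σ)) := by
    linarith [Nat.ceil_lt_add_one
      (div_nonneg (hlog.trans' (log_nonneg one_le_two)) (by positivity : 0 ≤ 2 * (1 - σ)))]
  have hKD : log √N ≤ (1 - σ) * K := by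
    rw [log_sqrt N.cast_nonneg]
    rw [div_le_iff₀ (by positivity)] at hK
    linarith
  refine (sum_Icc_min_one_mul_pow_le hσ₀ hσ₁
    (mul_pow_le_one_of_log_le (by positivity) hσ₀ hKD) n).trans ?_
  rw [lt_div_iff₀ (by positivity)] at hK'
  rw [add_div' _ _ _ hD.ne', div_le_div_iff_of_pos_right hD]
  linarith [log_two_gt_d9]

lemma sum_Icc_one_sub_reflect {M : Type*} [AddCommMonoid M] (f : ℕ → M) (t : ℕ) :
    ∑ τ ∈ Icc 1 (t - 1), f (t - τ) = ∑ k ∈ Icc 1 (t - 1), f k := by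
  refine sum_nbij' (t - ·) (t - ·) ?_ ?_ ?_ ?_ fun _ _ => rfl <;>
    · intro a
      simp only [mem_Icc]
      omega

theorem merged_parameter_concentration_general
    (N : ℕ) (hN : 2 ≤ N) (W : Matrix (Fin N) (Fin N) ℝ)
    (hnonneg : ∀ i j, 0 ≤ W i j)
    (hrow : ∀ i, ∑ j, W i j = 1)
    (hcol : ∀ j, ∑ i, W i j = 1)
    (hσ : secondSingular W < 1)
    (η : ℝ) (hη : 0 < η)
    (x : ℕ → Fin N → ℝ) (hx : ∀ τ j, x τ j ∈ Set.Icc (0:ℝ) 1) :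
    ∀ (i : Fin N) (t : ℕ),
      |(η * ∑ τ ∈ Finset.Icc 1 (t - 1), ∑ j, (W ^ (t - τ)) i j * x τ j + 1)
          - 1 - (η / N) * ∑ τ ∈ Finset.Icc 1 (t - 1), ∑ j, x τ j|
        ≤ 4 * η * Real.log N / (1 - secondSingular W) := by
  intro i t
  have hW : W ∈ doublyStochastic ℝ (Fin N) := mem_doublyStochastic_iff_sum.2 ⟨hnonneg, hrow, hcol⟩
  calc _ = |η * ∑ τ ∈ Icc 1 (t - 1), ((W ^ (t - τ) *ᵥ x τ) i - (∑ j, x τ j) / N)| := by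
        rw [sum_sub_distrib, ← sum_div]
        simp only [mulVec, dotProduct]
        ring_nf
    _ = η * |∑ τ ∈ Icc 1 (t - 1), ((W ^ (t - τ) *ᵥ x τ) i - (∑ j, x τ j) / N)| := by
        rw [abs_mul, abs_of_pos hη]
    _ ≤ η * ∑ τ ∈ Icc 1 (t - 1), min 1 (√N * secondSingular W ^ (t - τ)) := by
        gcongr
        exact (abs_sum_le_sum_abs _ _).trans (sum_le_sum fun τ _ =>
          abs_pow_mulVec_sub_mean_le_min hW (hx τ) _ i)
    _ = η * ∑ k ∈ Icc 1 (t - 1), min 1 (√N * secondSingular W ^ k) := by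
        rw [sum_Icc_one_sub_reflect (fun k => min 1 (√N * secondSingular W ^ k))]
    _ ≤ η * (4 * log N / (1 - secondSingular W)) := by
        gcongr
        exact sum_Icc_min_one_sqrt_mul_pow_le hN (secondSingular_nonneg W) hσ _
    _ = 4 * η * log N / (1 - secondSingular W) := by ring

theorem merged_parameter_concentration
    (N : ℕ) (hN : 2 ≤ N) (W : Matrix (Fin N) (Fin N) ℝ)
    (hnonneg : ∀ i j, 0 ≤ W i j)
    (hrow : ∀ i, ∑ j, W i j = 1)
    (hcol : ∀ j, ∑ i, W i j = 1)
    (hconn : ∀ i j, ∃ k : ℕ, 0 < (W ^ k) i j)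
    (hσ : secondSingular W < 1)
    (η : ℝ) (hη : 0 < η)
    (x : ℕ → Fin N → ℝ) (hx : ∀ τ j, x τ j ∈ Set.Icc (0:ℝ) 1) :
    ∀ (i : Fin N) (t : ℕ),
      |(η * ∑ τ ∈ Finset.Icc 1 (t - 1), ∑ j, (W ^ (t - τ)) i j * x τ j + 1)
          - 1 - (η / N) * ∑ τ ∈ Finset.Icc 1 (t - 1), ∑ j, x τ j|
        ≤ 4 * η * Real.log N / (1 - secondSingular W) :=
  merged_parameter_concentration_general N hN W hnonneg hrow hcol hσ η hη x hx
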